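/- arXiv:2004.12958 — 5 statements merged into one kernel-verified Lean document; each statement's English description precedes it below -/
import Mathlib

section
/- The square root DFA construction is correct: given a DFA A = (Σ, Q, i, F, δ), define the DFA Sqrt(A) with state set Q^Q (functions from Q to Q), initial state the identity function, final states { φ : Q → Q | φ(φ(i)) ∈ F }, and transition on letter a sending φ to δ^a ∘ φ. Then the language recognized by Sqrt(A) equals √{L(A)} = { w | w·w ∈ L(A) }. -/
/-- Extended transition function of a DFA: the state reached from q after reading w. -/
def extδ {Q α : Type*} (δ : Q → α → Q) (w : List α) (q : Q) : Q :=
  w.foldl δ q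

/-- Transition function of the square-root DFA: on letter a, φ is sent to δ^a ∘ φ. -/
def sqrtδ {Q α : Type*} (δ : Q → α → Q) : (Q → Q) → α → (Q → Q) :=
  fun φ a => (fun q => δ q a) ∘ φ

/-- The square root DFA construction is correct: with states Q^Q, initial state id,
final states {φ | φ (φ i) ∈ F} and transitions φ ↦ δ^a ∘ φ, the recognized language
is √{L(A)} = { w | w·w ∈ L(A) }. -/
theorem sqrt_dfa_correct {Q α : Type*} [Finite Q] (δ : Q → α → Q) (i : Q) (F : Set Q) :
    { w : List α | (extδ (sqrtδ δ) w id) ((extδ (sqrtδ δ) w id) i) ∈ F }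
      = { w : List α | extδ δ (w ++ w) i ∈ F } := by
  have key : ∀ (w : List α) (φ : Q → Q) (q : Q),
      extδ (sqrtδ δ) w φ q = extδ δ w (φ q) := by
    intro w
    induction w with
    | nil => intro φ q; rfl
    | cons a t ih => intro φ q; simp [extδ, sqrtδ] at *; exact ih _ _
  ext w
  simp only [Set.mem_setOf_eq, key]
  simp [extδ, List.foldl_append]
end

section
/- For a DFA A over alphabet Σ and any p ∈ ℕ, the language √[p]{L(A)} = { w | w^p ∈ L(A) } is recognized by the DFA with state set Q^Q, initial state id_Q, final states { φ | φ^p(i) ∈ F }, and transitions sending φ to δ^a ∘ φ on letter a. In particular, every root of a regular language is regular. -/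
/-- Transition function of the root DFA: on letter a, φ is sent to δ^a ∘ φ. -/
def rootδ {Q α : Type*} (δ : Q → α → Q) : (Q → Q) → α → (Q → Q) :=
  fun φ a => (fun q => δ q a) ∘ φ

/-- The p-fold concatenation of a word. -/
def wpow {α : Type*} (w : List α) (p : ℕ) : List α :=
  (List.replicate p w).flatten


lemma extδ_root {Q α : Type*} (δ : Q → α → Q) (w : List α) (φ : Q → Q) :
    extδ (rootδ δ) w φ = fun q => extδ δ w (φ q) := by
  induction w generalizing φ with
  | nil => rfl
  | cons a t ih => simp [extδ, rootδ] at *; exact ih _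

lemma iter_eq {Q α : Type*} (δ : Q → α → Q) (w : List α) (p : ℕ) (q : Q) :
    (fun x => extδ δ w x)^[p] q = extδ δ (wpow w p) q := by
  induction p generalizing q with
  | zero => rfl
  | succ n ih =>
      rw [Function.iterate_succ_apply]
      simp only [wpow, List.replicate_succ, List.flatten_cons]
      rw [ih]
      simp [extδ, List.foldl_append, wpow]

/-- The DFA with states Q^Q, initial state id, final states {φ | φ^p(i) ∈ F} and
transitions φ ↦ δ^a ∘ φ recognizes √[p]{L(A)} = { w | w^p ∈ L(A) }.  In particular,
every root of a regular language is regular. -/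
theorem root_dfa_correct {Q α : Type*} [Finite Q] (δ : Q → α → Q) (i : Q) (F : Set Q)
    (p : ℕ) :
    { w : List α | (extδ (rootδ δ) w id)^[p] i ∈ F }
      = { w : List α | extδ δ (wpow w p) i ∈ F } := by
  ext w
  simp only [Set.mem_setOf_eq, extδ_root]
  simp only [id]; rw [iter_eq]
end

section
/- Let n ≥ 2 and let Q = {0,…,n−1}. For any φ, ψ : Q → Q with ψ non-constant and φ ≠ ψ, there exists ζ : Q → Q such that exactly one of the two characteristic sequences χ^{ζ∘φ}_{0,{n−1}} and χ^{ζ∘ψ}_{0,{n−1}} belongs to the set {𝟘, 𝟘¹}, where 𝟘 is the all-false sequence and 𝟘¹ is the sequence (false, true, true, true, …). -/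
/-- Characteristic sequence of g in state configuration (Q, i, F). -/
def chi {Q : Type*} [DecidableEq Q] (g : Q → Q) (i : Q) (F : Finset Q) : ℕ → Bool :=
  fun p => decide (g^[p] i ∈ F)

/-- The all-false sequence 𝟘. -/
def zeroSeq : ℕ → Bool := fun _ => false

/-- The sequence 𝟘¹ = (false, true, true, …). -/
def zeroOneSeq : ℕ → Bool := fun p => decide (p ≠ 0)

section aux

variable {Q : Type*} [DecidableEq Q]

lemma chi_eq_zeroSeq {g : Q → Q} {i q : Q} (S : Set Q) (hi : i ∈ S)
    (hS : ∀ x ∈ S, g x ∈ S) (hq : ∀ x ∈ S, x ≠ q) :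
    chi g i {q} = zeroSeq := by
  funext p
  have h : g^[p] i ∈ S := by
    induction p with
    | zero => simpa using hi
    | succ p ih => rw [Function.iterate_succ_apply']; exact hS _ ih
  simp [chi, zeroSeq, hq _ h]

lemma chi_eq_zeroOneSeq {g : Q → Q} {i q : Q} (hi : i ≠ q) (h1 : g i = q)
    (h2 : g q = q) : chi g i {q} = zeroOneSeq := by
  funext p
  match p with
  | 0 => simp [chi, zeroOneSeq, hi]
  | p + 1 =>
    have h : g^[p + 1] i = q := by
      induction p with
      | zero => simpa using h1
      | succ p ih => rw [Function.iterate_succ_apply', ih, h2]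
    simp [chi, zeroOneSeq, h]

lemma chi_not_mem {g : Q → Q} {i q : Q} {p p' : ℕ} (hp' : p' ≠ 0)
    (h1 : g^[p] i = q) (h2 : g^[p'] i ≠ q) :
    chi g i {q} ∉ ({zeroSeq, zeroOneSeq} : Set (ℕ → Bool)) := by
  intro hm
  rw [Set.mem_insert_iff, Set.mem_singleton_iff] at hm
  rcases hm with h | h
  · have := congrFun h p
    simp [chi, zeroSeq, h1] at this
  · have := congrFun h p'
    simp [chi, zeroOneSeq, h2, hp'] at this

lemma key (z q : Q) (hzq : z ≠ q) (φ ψ : Q → Q)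
    (hψ : ¬ ∃ c : Q, ∀ x : Q, ψ x = c) (hne : φ ≠ ψ) :
    ∃ ζ : Q → Q,
      (chi (ζ ∘ φ) z {q} ∈ ({zeroSeq, zeroOneSeq} : Set (ℕ → Bool)))
        ↔ (chi (ζ ∘ ψ) z {q} ∉ ({zeroSeq, zeroOneSeq} : Set (ℕ → Bool))) := by
  by_cases hA : φ z = ψ z
  · by_cases hB : ∃ a, a ≠ q ∧ φ a ≠ ψ a
    · obtain ⟨a, haq, hav⟩ := hB
      by_cases hdv : φ z = ψ a
      · -- B2 : ψ-side in (zeroSeq), φ-side out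
        refine ⟨fun x => if x = φ a then q else if x = φ z then a else z, ?_⟩
        have hdu : φ z ≠ φ a := fun h => hav (h.symm.trans hdv)
        have h1 : chi ((fun x => if x = φ a then q else if x = φ z then a else z) ∘ ψ) z {q}
            ∈ ({zeroSeq, zeroOneSeq} : Set (ℕ → Bool)) := by
          refine Set.mem_insert_iff.mpr (Or.inl (chi_eq_zeroSeq {z, a} (by simp) ?_ ?_))
          · rintro x (rfl | rfl)
            · simp [← hA, hdu]
            · simp [← hdv, hdu]
          · rintro x (rfl | rfl)
            exacts [hzq, haq]
        have e1 : ((fun x => if x = φ a then q else if x = φ z then a else z) ∘ φ) z = a := by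
          simp [hdu]
        have e2 : ((fun x => if x = φ a then q else if x = φ z then a else z) ∘ φ)^[2] z = q := by
          rw [show (2:ℕ) = 1 + 1 from rfl, Function.iterate_succ_apply', Function.iterate_one, e1]
          simp
        have h2 : chi ((fun x => if x = φ a then q else if x = φ z then a else z) ∘ φ) z {q}
            ∉ ({zeroSeq, zeroOneSeq} : Set (ℕ → Bool)) :=
          chi_not_mem one_ne_zero e2 (by rw [Function.iterate_one, e1]; exact haq)
        exact ⟨fun h => absurd h h2, fun h => absurd h1 h⟩
      · -- B1 : φ-side in (zeroSeq), ψ-side out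
        refine ⟨fun x => if x = ψ a then q else if x = φ z then a else z, ?_⟩
        have h1 : chi ((fun x => if x = ψ a then q else if x = φ z then a else z) ∘ φ) z {q}
            ∈ ({zeroSeq, zeroOneSeq} : Set (ℕ → Bool)) := by
          refine Set.mem_insert_iff.mpr (Or.inl (chi_eq_zeroSeq {z, a} (by simp) ?_ ?_))
          · rintro x (rfl | rfl)
            · simp [hdv]
            · simp only [Function.comp_apply, if_neg hav]
              split <;> simp
          · rintro x (rfl | rfl)
            exacts [hzq, haq]
        have e1 : ((fun x => if x = ψ a then q else if x = φ z then a else z) ∘ ψ) z = a := by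
          simp [← hA, hdv]
        have e2 : ((fun x => if x = ψ a then q else if x = φ z then a else z) ∘ ψ)^[2] z = q := by
          rw [show (2:ℕ) = 1 + 1 from rfl, Function.iterate_succ_apply', Function.iterate_one, e1]
          simp
        have h2 : chi ((fun x => if x = ψ a then q else if x = φ z then a else z) ∘ ψ) z {q}
            ∉ ({zeroSeq, zeroOneSeq} : Set (ℕ → Bool)) :=
          chi_not_mem one_ne_zero e2 (by rw [Function.iterate_one, e1]; exact haq)
        exact ⟨fun _ => h2, fun _ => h1⟩
    · -- only disagreement at q
      push_neg at hB
      have hq : φ q ≠ ψ q := by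
        obtain ⟨a, ha⟩ := Function.ne_iff.mp hne
        rcases eq_or_ne a q with rfl | h
        · exact ha
        · exact absurd (hB a h) ha
      by_cases hdv : φ z = ψ q
      · -- Bq2 : ψ-side in (zeroOneSeq), φ-side out
        refine ⟨fun x => if x = φ q then z else q, ?_⟩
        have hdu : φ z ≠ φ q := fun h => hq (h.symm.trans hdv)
        have h1 : chi ((fun x => if x = φ q then z else q) ∘ ψ) z {q}
            ∈ ({zeroSeq, zeroOneSeq} : Set (ℕ → Bool)) := by
          refine Set.mem_insert_iff.mpr (Or.inr ?_)
          refine chi_eq_zeroOneSeq hzq ?_ ?_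
          · simp only [Function.comp_apply, ← hA, if_neg hdu]
          · simp only [Function.comp_apply, ← hdv, if_neg hdu]
        have e1 : ((fun x => if x = φ q then z else q) ∘ φ) z = q := by
          simp only [Function.comp_apply, if_neg hdu]
        have e2 : ((fun x => if x = φ q then z else q) ∘ φ)^[2] z = z := by
          rw [show (2:ℕ) = 1 + 1 from rfl, Function.iterate_succ_apply', Function.iterate_one, e1]
          simp
        have h2 : chi ((fun x => if x = φ q then z else q) ∘ φ) z {q}
            ∉ ({zeroSeq, zeroOneSeq} : Set (ℕ → Bool)) := by
          refine chi_not_mem (p := 1) (p' := 2) two_ne_zero ?_ ?_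
          · rw [Function.iterate_one, e1]
          · rw [e2]; exact hzq
        exact ⟨fun h => absurd h h2, fun h => absurd h1 h⟩
      · -- Bq1 : φ-side in (zeroOneSeq), ψ-side out
        refine ⟨fun x => if x = ψ q then z else q, ?_⟩
        have h1 : chi ((fun x => if x = ψ q then z else q) ∘ φ) z {q}
            ∈ ({zeroSeq, zeroOneSeq} : Set (ℕ → Bool)) := by
          refine Set.mem_insert_iff.mpr (Or.inr ?_)
          refine chi_eq_zeroOneSeq hzq ?_ ?_
          · simp only [Function.comp_apply, if_neg hdv]
          · simp only [Function.comp_apply, if_neg hq]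
        have e1 : ((fun x => if x = ψ q then z else q) ∘ ψ) z = q := by
          simp only [Function.comp_apply, ← hA, if_neg hdv]
        have e2 : ((fun x => if x = ψ q then z else q) ∘ ψ)^[2] z = z := by
          rw [show (2:ℕ) = 1 + 1 from rfl, Function.iterate_succ_apply', Function.iterate_one, e1]
          simp
        have h2 : chi ((fun x => if x = ψ q then z else q) ∘ ψ) z {q}
            ∉ ({zeroSeq, zeroOneSeq} : Set (ℕ → Bool)) := by
          refine chi_not_mem (p := 1) (p' := 2) two_ne_zero ?_ ?_
          · rw [Function.iterate_one, e1]
          · rw [e2]; exact hzq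
        exact ⟨fun _ => h2, fun _ => h1⟩
  · -- Case A : φ z ≠ ψ z
    by_cases hA1 : ψ q = ψ z
    · by_cases hA2 : φ q = φ z
      · -- A3
        push_neg at hψ
        obtain ⟨b, hb⟩ := hψ (ψ z)
        have hbq : b ≠ q := fun h => hb (h ▸ hA1)
        by_cases hA3 : ψ b = φ z
        · -- A3a : φ-side in (zeroOneSeq), ψ-side out
          refine ⟨fun x => if x = ψ z then b else q, ?_⟩
          have h1 : chi ((fun x => if x = ψ z then b else q) ∘ φ) z {q}
              ∈ ({zeroSeq, zeroOneSeq} : Set (ℕ → Bool)) := by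
            refine Set.mem_insert_iff.mpr (Or.inr ?_)
            refine chi_eq_zeroOneSeq hzq ?_ ?_
            · simp only [Function.comp_apply, if_neg hA]
            · simp only [Function.comp_apply, hA2, if_neg hA]
          have e1 : ((fun x => if x = ψ z then b else q) ∘ ψ) z = b := by
            simp
          have e2 : ((fun x => if x = ψ z then b else q) ∘ ψ)^[2] z = q := by
            rw [show (2:ℕ) = 1 + 1 from rfl, Function.iterate_succ_apply',
              Function.iterate_one, e1]
            simp only [Function.comp_apply, if_neg hb]
          have h2 : chi ((fun x => if x = ψ z then b else q) ∘ ψ) z {q}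
              ∉ ({zeroSeq, zeroOneSeq} : Set (ℕ → Bool)) :=
            chi_not_mem one_ne_zero e2 (by rw [Function.iterate_one, e1]; exact hbq)
          exact ⟨fun _ => h2, fun _ => h1⟩
        · -- A3b : φ-side in (zeroSeq), ψ-side out
          refine ⟨fun x => if x = ψ z then b else if x = ψ b then q else z, ?_⟩
          have h1 : chi ((fun x => if x = ψ z then b else if x = ψ b then q else z) ∘ φ) z {q}
              ∈ ({zeroSeq, zeroOneSeq} : Set (ℕ → Bool)) := by
            have hA3' : φ z ≠ ψ b := fun h => hA3 h.symm
            refine Set.mem_insert_iff.mpr (Or.inl (chi_eq_zeroSeq {z} rfl ?_ ?_))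
            · intro x hx
              rw [Set.mem_singleton_iff] at hx
              subst hx
              simp [hA, hA3']
            · intro x hx
              rw [Set.mem_singleton_iff] at hx
              subst hx
              exact hzq
          have e1 : ((fun x => if x = ψ z then b else if x = ψ b then q else z) ∘ ψ) z = b := by
            simp
          have e2 : ((fun x => if x = ψ z then b else if x = ψ b then q else z) ∘ ψ)^[2] z
              = q := by
            rw [show (2:ℕ) = 1 + 1 from rfl, Function.iterate_succ_apply',
              Function.iterate_one, e1]
            simp [hb]
          have h2 : chi ((fun x => if x = ψ z then b else if x = ψ b then q else z) ∘ ψ) z {q}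
              ∉ ({zeroSeq, zeroOneSeq} : Set (ℕ → Bool)) :=
            chi_not_mem one_ne_zero e2 (by rw [Function.iterate_one, e1]; exact hbq)
          exact ⟨fun _ => h2, fun _ => h1⟩
      · -- A2 : ψ-side in (zeroSeq), φ-side out
        refine ⟨fun x => if x = φ z then q else z, ?_⟩
        have h1 : chi ((fun x => if x = φ z then q else z) ∘ ψ) z {q}
            ∈ ({zeroSeq, zeroOneSeq} : Set (ℕ → Bool)) := by
          have hA' : ψ z ≠ φ z := fun h => hA h.symm
          refine Set.mem_insert_iff.mpr (Or.inl (chi_eq_zeroSeq {z} rfl ?_ ?_))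
          · intro x hx
            rw [Set.mem_singleton_iff] at hx
            subst hx
            simp [hA']
          · intro x hx
            rw [Set.mem_singleton_iff] at hx
            subst hx
            exact hzq
        have e1 : ((fun x => if x = φ z then q else z) ∘ φ) z = q := by
          simp
        have e2 : ((fun x => if x = φ z then q else z) ∘ φ)^[2] z = z := by
          rw [show (2:ℕ) = 1 + 1 from rfl, Function.iterate_succ_apply', Function.iterate_one, e1]
          simp only [Function.comp_apply, if_neg hA2]
        have h2 : chi ((fun x => if x = φ z then q else z) ∘ φ) z {q}
            ∉ ({zeroSeq, zeroOneSeq} : Set (ℕ → Bool)) := by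
          refine chi_not_mem (p := 1) (p' := 2) two_ne_zero ?_ ?_
          · rw [Function.iterate_one, e1]
          · rw [e2]; exact hzq
        exact ⟨fun h => absurd h h2, fun h => absurd h1 h⟩
    · -- A1 : φ-side in (zeroSeq), ψ-side out
      refine ⟨fun x => if x = ψ z then q else z, ?_⟩
      have h1 : chi ((fun x => if x = ψ z then q else z) ∘ φ) z {q}
          ∈ ({zeroSeq, zeroOneSeq} : Set (ℕ → Bool)) := by
        refine Set.mem_insert_iff.mpr (Or.inl (chi_eq_zeroSeq {z} rfl ?_ ?_))
        · intro x hx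
          rw [Set.mem_singleton_iff] at hx
          subst hx
          simp [hA]
        · intro x hx
          rw [Set.mem_singleton_iff] at hx
          subst hx
          exact hzq
      have e1 : ((fun x => if x = ψ z then q else z) ∘ ψ) z = q := by
        simp
      have e2 : ((fun x => if x = ψ z then q else z) ∘ ψ)^[2] z = z := by
        rw [show (2:ℕ) = 1 + 1 from rfl, Function.iterate_succ_apply', Function.iterate_one, e1]
        simp only [Function.comp_apply, if_neg hA1]
      have h2 : chi ((fun x => if x = ψ z then q else z) ∘ ψ) z {q}
          ∉ ({zeroSeq, zeroOneSeq} : Set (ℕ → Bool)) := by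
        refine chi_not_mem (p := 1) (p' := 2) two_ne_zero ?_ ?_
        · rw [Function.iterate_one, e1]
        · rw [e2]; exact hzq
      exact ⟨fun _ => h2, fun _ => h1⟩

end aux

/-- For n ≥ 2, φ, ψ : {0,…,n−1} → {0,…,n−1} with ψ non-constant and φ ≠ ψ, there is a
ζ such that exactly one of χ^{ζ∘φ}_{0,{n−1}} and χ^{ζ∘ψ}_{0,{n−1}} lies in {𝟘, 𝟘¹}. -/
theorem lemma_dis (n : ℕ) (hn : 2 ≤ n) (φ ψ : Fin n → Fin n)
    (hψ : ¬ ∃ c : Fin n, ∀ x : Fin n, ψ x = c) (hne : φ ≠ ψ) :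
    ∃ ζ : Fin n → Fin n,
      (chi (ζ ∘ φ) ⟨0, by omega⟩ {⟨n - 1, by omega⟩} ∈ ({zeroSeq, zeroOneSeq} : Set (ℕ → Bool)))
        ↔ (chi (ζ ∘ ψ) ⟨0, by omega⟩ {⟨n - 1, by omega⟩} ∉ ({zeroSeq, zeroOneSeq} : Set (ℕ → Bool))) := by
  apply key
  · intro h
    have := congrArg Fin.val h
    simp at this
    omega
  · exact hψ
  · exact hne
end

section
/- Let A = (Σ, Q, i, F, δ) be a DFA and consider the 'standard' DFA B with states Q^Q, initial state id_Q, transitions sending ψ to δ^a ∘ ψ on letter a, and final set of the form { ψ | χ^ψ_{i,F} ∈ E } for a fixed set E of Boolean sequences. Then a word w = a₁⋯a_n is accepted by B if and only if the sequence p ↦ ((δ^w)^p(i) ∈ F) is in E; that is, L(B) = ⋃_{u ∈ E} { w | ∀ p ∈ ℕ, w^p ∈ L(A) ↔ u_p = true }. -/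
lemma extδ_fun {Q α : Type*} (δ : Q → α → Q) (w : List α) :
    ∀ g : Q → Q, extδ (fun (ψ : Q → Q) (a : α) => (fun q => δ q a) ∘ ψ) w g
      = (fun q => extδ δ w q) ∘ g := by
  induction w with
  | nil => intro g; rfl
  | cons a w ih =>
      intro g
      simp only [extδ, List.foldl_cons] at *
      rw [ih]
      rfl

lemma extδ_append {Q α : Type*} (δ : Q → α → Q) (u v : List α) (q : Q) :
    extδ δ (u ++ v) q = extδ δ v (extδ δ u q) := by
  simp [extδ]

lemma extδ_iter {Q α : Type*} (δ : Q → α → Q) (w : List α) (p : ℕ) (q : Q) :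
    (fun q => extδ δ w q)^[p] q = extδ δ (wpow w p) q := by
  induction p generalizing q with
  | zero => rfl
  | succ p ih =>
      rw [Function.iterate_succ_apply]
      rw [ih]
      have : wpow w (p + 1) = w ++ wpow w p := by
        simp [wpow, List.replicate_succ]
      rw [this, extδ_append]

/-- For the standard DFA B (states Q^Q, initial state id, transitions ψ ↦ δ^a ∘ ψ,
final states {ψ | χ^ψ_{i,F} ∈ E}), a word w is accepted iff the characteristic
sequence of δ^w is in E; equivalently,
L(B) = ⋃_{u ∈ E} { w | ∀ p, w^p ∈ L(A) ↔ u_p = true }. -/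
theorem standard_dfa_language {Q α : Type*} [Finite Q] [DecidableEq Q]
    (δ : Q → α → Q) (i : Q) (F : Finset Q) (E : Set (ℕ → Bool)) :
    ({ w : List α | chi (extδ (fun (ψ : Q → Q) (a : α) => (fun q => δ q a) ∘ ψ) w id) i F ∈ E }
        = { w : List α | chi (fun q => extδ δ w q) i F ∈ E }) ∧
    ({ w : List α | chi (fun q => extδ δ w q) i F ∈ E }
        = ⋃ u ∈ E,
            { w : List α | ∀ p : ℕ, wpow w p ∈ { v : List α | extδ δ v i ∈ F } ↔ u p = true }) := by
  constructor
  · ext w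
    simp only [Set.mem_setOf_eq, extδ_fun, Function.comp_id]
  · ext w
    simp only [Set.mem_setOf_eq, Set.mem_iUnion, exists_prop]
    constructor
    · intro h
      refine ⟨chi (fun q => extδ δ w q) i F, h, fun p => ?_⟩
      simp [chi, extδ_iter]
    · rintro ⟨u, hu, hp⟩
      have : chi (fun q => extδ δ w q) i F = u := by
        funext p
        have := hp p
        simp only [Set.mem_setOf_eq, ← extδ_iter] at this
        simp [chi, this]
      rw [this]; exact hu
end

section
/- Injectivity of the correspondence between sets of eventually periodic Boolean sequences and the operations they define (unary case): if u is an eventually periodic Boolean sequence, then the language L_u = { a^p | p ∈ ℕ, u_p = true } over the one-letter alphabet {a} is regular, and for any eventually periodic Boolean sequence u', the word a belongs to the language ⟨u', L_u⟩ = { w | ∀ p ∈ ℕ, (w^p ∈ L_u ↔ u'_p = true) } if and only if u' = u. -/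
/-- A Boolean sequence is eventually periodic. -/
def EvPer (u : ℕ → Bool) : Prop :=
  ∃ a b : ℕ, 0 < b ∧ ∀ p : ℕ, a ≤ p → u (p + b) = u p

/-- The language ⟨u, L⟩. -/
def bracket {α : Type*} (u : ℕ → Bool) (L : Set (List α)) : Set (List α) :=
  { w | ∀ p : ℕ, wpow w p ∈ L ↔ u p = true }

lemma wpow_unit_length (p : ℕ) : (wpow ([()] : List Unit) p).length = p := by
  simp [wpow]

/-- For an eventually periodic Boolean sequence u, the language
L_u = { a^p | u_p = true } over a one-letter alphabet is regular, and for any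
eventually periodic u', the letter a belongs to ⟨u', L_u⟩ iff u' = u. -/
theorem op_injective_unary (u : ℕ → Bool) (hu : EvPer u) :
    (∃ (Q : Type) (_ : Finite Q) (δ : Q → Unit → Q) (i : Q) (F : Set Q),
       { w : List Unit | u w.length = true } = { w : List Unit | w.foldl δ i ∈ F }) ∧
    (∀ u' : ℕ → Bool, EvPer u' →
       (([()] : List Unit) ∈ bracket u' { w : List Unit | u w.length = true } ↔ u' = u)) := by
  constructor
  · obtain ⟨a, b, hb, hper⟩ := hu
    have hNpos : 0 < a + b := by omega
    set δ : Fin (a + b) → Unit → Fin (a + b) := fun q _ =>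
      if h : q.val + 1 < a + b then ⟨q.val + 1, h⟩ else ⟨a, by omega⟩ with hδ
    set g : ℕ → ℕ := fun n => if n < a + b then n else a + (n - a) % b with hg
    -- periodicity iterated
    have key1 : ∀ q m, a ≤ m → u (m + q * b) = u m := by
      intro q
      induction q with
      | zero => intro m _; simp
      | succ k ih =>
        intro m hm
        have : m + (k + 1) * b = (m + k * b) + b := by ring
        rw [this, hper _ (by omega), ih m hm]
    have key2 : ∀ n, u (g n) = u n := by
      intro n
      by_cases h : n < a + b
      · simp [hg, h]
      · have hn : a ≤ n := by omega
        have hmd : (n - a) % b + ((n - a) / b) * b = n - a := by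
          rw [Nat.mod_add_div' ]
        have heq : n = (a + (n - a) % b) + ((n - a) / b) * b := by omega
        have hgn : g n = a + (n - a) % b := by simp [hg, h]
        rw [hgn]
        conv_rhs => rw [heq]
        rw [key1 _ _ (by omega)]
    have key3 : ∀ n, ((List.replicate n ()).foldl δ ⟨0, hNpos⟩).val = g n := by
      intro n
      induction n with
      | zero => simp [hg, hNpos]
      | succ k ih =>
        rw [List.replicate_succ', List.foldl_append]
        simp only [List.foldl_cons, List.foldl_nil, hδ]
        by_cases h : ((List.replicate k ()).foldl δ ⟨0, hNpos⟩).val + 1 < a + b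
        · rw [dif_pos h, Fin.val_mk, ih]
          rw [ih] at h
          simp only [hg] at h ⊢
          by_cases hk : k < a + b
          · rw [if_pos hk] at h
            rw [if_pos hk, if_pos h]
          · rw [if_neg hk] at h
            rw [if_neg hk, if_neg (by omega : ¬ k + 1 < a + b)]
            have hak : a ≤ k := by omega
            have hlt : (k - a) % b < b := Nat.mod_lt _ hb
            have hr : (k - a) % b + 1 < b := by omega
            have h1 : k + 1 - a = (k - a) + 1 := by omega
            have hb1 : 1 < b := by omega
            rw [h1, Nat.add_mod, Nat.mod_eq_of_lt hb1, Nat.mod_eq_of_lt hr]; omega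
        · rw [dif_neg h, Fin.val_mk]
          rw [ih] at h
          simp only [hg] at h ⊢
          by_cases hk : k < a + b
          · rw [if_pos hk] at h
            have hkeq : k + 1 = a + b := by omega
            rw [if_neg (by omega : ¬ k + 1 < a + b)]
            have : k + 1 - a = b := by omega
            rw [this, Nat.mod_self]
            omega
          · rw [if_neg hk] at h
            have hak : a ≤ k := by omega
            have hlt : (k - a) % b < b := Nat.mod_lt _ hb
            have hr : (k - a) % b = b - 1 := by omega
            rw [if_neg (by omega : ¬ k + 1 < a + b)]
            have h1 : k + 1 - a = (k - a) + 1 := by omega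
            rw [h1, Nat.add_mod, hr]
            have : b - 1 + 1 % b = b ∨ b = 1 := by
              rcases Nat.eq_or_lt_of_le hb with h2 | h2
              · right; omega
              · left; rw [Nat.one_mod_eq_one.mpr (by omega)]; omega
            rcases this with h2 | h2
            · rw [h2, Nat.mod_self]
              omega
            · simp [h2]
    refine ⟨Fin (a + b), Finite.of_fintype _, δ, ⟨0, hNpos⟩, {q | u q.val = true}, ?_⟩
    ext w
    have hw : w = List.replicate w.length () := by
      apply List.eq_replicate_length.mpr; intro x _; rfl
    simp only [Set.mem_setOf_eq]
    constructor
    · intro h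
      rw [hw]
      show u _ = true
      rw [key3, key2]; exact h
    · intro h
      rw [hw] at h
      have h3 := key3 w.length
      rw [← key2 w.length, ← h3]
      exact h
  · intro u' _
    constructor
    · intro h
      funext p
      have := h p
      simp only [Set.mem_setOf_eq, wpow_unit_length] at this
      by_cases hp : u p <;> by_cases hp' : u' p <;> simp_all
    · rintro rfl
      intro p
      simp [Set.mem_setOf_eq, wpow_unit_length]
end
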